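/- Let X and Y be real Banach spaces, 1 ≤ p < ∞, and Z = X ⊕_p Y (the product X × Y with norm ‖(x,y)‖ = (‖x‖^p + ‖y‖^p)^{1/p}). If X has the Ball Small Combination of Slices Property (BSCSP) or Y has BSCSP, then Z has BSCSP. -/

import Mathlib

open Metric Topology Pointwise ENNReal

noncomputable section

/-- The slice `S(B_X, f, α) = {x ∈ B_X : f x > 1 - α}` of the closed unit ball of `X`
determined by the functional `f` and `α`. -/
def ballSlice (X : Type*) [NormedAddCommGroup X] [NormedSpace ℝ X]
    (f : X →L[ℝ] ℝ) (α : ℝ) : Set X :=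
  {x | x ∈ closedBall (0 : X) 1 ∧ 1 - α < f x}

/-- `X` has the Ball Dentable Property: the closed unit ball has slices (determined by
norm-one functionals) of arbitrarily small diameter. -/
def BDP (X : Type*) [NormedAddCommGroup X] [NormedSpace ℝ X] : Prop :=
  ∀ ε > (0 : ℝ), ∃ f : X →L[ℝ] ℝ, ‖f‖ = 1 ∧ ∃ α > (0 : ℝ), diam (ballSlice X f α) < ε

/-- The weak topology on `X`: the coarsest topology making all continuous linear
functionals continuous. -/
def weakTop (X : Type*) [NormedAddCommGroup X] [NormedSpace ℝ X] : TopologicalSpace X :=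
  ⨅ f : X →L[ℝ] ℝ, TopologicalSpace.induced f inferInstance

/-- `X` has the Ball Huskable Property: the closed unit ball has nonempty relatively
weakly open subsets of arbitrarily small diameter. -/
def BHP (X : Type*) [NormedAddCommGroup X] [NormedSpace ℝ X] : Prop :=
  ∀ ε > (0 : ℝ), ∃ V : Set X, IsOpen[weakTop X] V ∧
    (V ∩ closedBall (0 : X) 1).Nonempty ∧ diam (V ∩ closedBall (0 : X) 1) < ε

/-- `X` has the Ball Small Combination of Slices Property: there are finite convex
combinations of slices of the closed unit ball of arbitrarily small diameter. -/
def BSCSP (X : Type*) [NormedAddCommGroup X] [NormedSpace ℝ X] : Prop :=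
  ∀ ε > (0 : ℝ), ∃ (n : ℕ) (f : Fin n → X →L[ℝ] ℝ) (α lam : Fin n → ℝ),
    (∀ i, ‖f i‖ = 1) ∧ (∀ i, 0 < α i) ∧ (∀ i, 0 ≤ lam i) ∧ (∑ i, lam i = 1) ∧
    diam (∑ i, lam i • ballSlice X (f i) (α i)) < ε

/-- The weak* ballSlice `{g ∈ B_{E*} : g e > 1 - α}` of the closed unit ball of the dual of `E`
determined by `e : E` and `α`. -/
def wstarSlice (E : Type*) [NormedAddCommGroup E] [NormedSpace ℝ E]
    (e : E) (α : ℝ) : Set (E →L[ℝ] ℝ) :=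
  {g | g ∈ closedBall (0 : E →L[ℝ] ℝ) 1 ∧ 1 - α < g e}

/-- The dual of `E` has the w*-Ball Dentable Property: the closed unit ball of `E*` has
weak* slices (determined by norm-one elements of `E`) of arbitrarily small diameter. -/
def wstarBDP (E : Type*) [NormedAddCommGroup E] [NormedSpace ℝ E] : Prop :=
  ∀ ε > (0 : ℝ), ∃ e : E, ‖e‖ = 1 ∧ ∃ α > (0 : ℝ), diam (wstarSlice E e α) < ε

/-- The weak* topology `σ(E*, E)` on the dual of `E`. -/
def wstarTop (E : Type*) [NormedAddCommGroup E] [NormedSpace ℝ E] :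
    TopologicalSpace (E →L[ℝ] ℝ) :=
  ⨅ e : E, TopologicalSpace.induced (fun g : E →L[ℝ] ℝ => g e) inferInstance

/-- The dual of `E` has the w*-Ball Huskable Property: the closed unit ball of `E*` has
nonempty relatively weak*-open subsets of arbitrarily small diameter. -/
def wstarBHP (E : Type*) [NormedAddCommGroup E] [NormedSpace ℝ E] : Prop :=
  ∀ ε > (0 : ℝ), ∃ V : Set (E →L[ℝ] ℝ), IsOpen[wstarTop E] V ∧
    (V ∩ closedBall (0 : E →L[ℝ] ℝ) 1).Nonempty ∧
    diam (V ∩ closedBall (0 : E →L[ℝ] ℝ) 1) < ε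

/-- The dual of `E` has the w*-Ball Small Combination of Slices Property: there are finite
convex combinations of weak* slices of the closed unit ball of `E*` of arbitrarily small
diameter. -/
def wstarBSCSP (E : Type*) [NormedAddCommGroup E] [NormedSpace ℝ E] : Prop :=
  ∀ ε > (0 : ℝ), ∃ (n : ℕ) (e : Fin n → E) (α lam : Fin n → ℝ),
    (∀ i, ‖e i‖ = 1) ∧ (∀ i, 0 < α i) ∧ (∀ i, 0 ≤ lam i) ∧ (∑ i, lam i = 1) ∧
    diam (∑ i, lam i • wstarSlice E (e i) (α i)) < ε

/-! Pull back each slice `S(B_X, f, α)` of a convex combination of small diameter along the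
coordinate projection `P : X ⊕_p Y → X`, shrinking `α` to some `δ`. A point `(x, y)` of the new
slice has `x` in the old slice and `‖x‖ > 1 - δ`; since `‖x‖ ^ p + ‖y‖ ^ p ≤ 1` with `p < ∞`, this
forces `‖y‖` to be small, so the new combination has diameter at most the old one plus a small
error. -/

lemma Real.exists_pos_lt_of_rpow_add_rpow_le_one {q : ℝ} (hq : 1 ≤ q) {s : ℝ} (hs : 0 < s) :
    ∃ δ > 0, ∀ a b : ℝ, 0 ≤ b → a ^ q + b ^ q ≤ 1 → 1 - δ < a → b < s := by
  have hq0 : 0 < q := one_pos.trans_le hq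
  set δ := min (s ^ q / q) 1
  refine ⟨δ, lt_min (by positivity) one_pos, fun a b hb hab ha => ?_⟩
  have hδ1 : δ ≤ 1 := min_le_right _ _
  have hqδ : q * δ ≤ s ^ q :=
    (mul_le_mul_of_nonneg_left (min_le_left _ _) hq0.le).trans_eq (by field_simp)
  have bernoulli : 1 - q * δ ≤ (1 - δ) ^ q := by
    simpa [← sub_eq_add_neg] using
      one_add_mul_self_le_rpow_one_add (s := -δ) (by linarith) hq
  have ha' : (1 - δ) ^ q < a ^ q := Real.rpow_lt_rpow (by linarith) ha hq0
  rw [← Real.rpow_lt_rpow_iff hb hs.le hq0]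
  linarith

theorem Convex.sum_smul_subset {E ι : Type*} [AddCommGroup E] [Module ℝ E] [Fintype ι]
    {C : Set E} (hC : Convex ℝ C) {lam : ι → ℝ} (h0 : ∀ i, 0 ≤ lam i) (h1 : ∑ i, lam i = 1)
    {S : ι → Set E} (hS : ∀ i, S i ⊆ C) : ∑ i, lam i • S i ⊆ C := by
  intro z hz
  obtain ⟨g, hg, rfl⟩ := (Set.mem_fintype_sum _ _).1 hz
  choose w hw hgw using fun i => Set.mem_smul_set.1 (hg i)
  simp_rw [← hgw]
  exact hC.sum_mem (fun i _ => h0 i) h1 fun i _ => hS i (hw i)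

theorem LinearMap.image_sum_smul_subset {E F ι : Type*} [AddCommGroup E] [Module ℝ E]
    [AddCommGroup F] [Module ℝ F] [Fintype ι] (P : E →ₗ[ℝ] F) (lam : ι → ℝ)
    {S : ι → Set E} {T : ι → Set F} (hST : ∀ i, Set.MapsTo P (S i) (T i)) :
    P '' ∑ i, lam i • S i ⊆ ∑ i, lam i • T i := by
  rw [Set.image_finsetSum]
  refine Set.finsetSum_subset_finsetSum _ _ _ fun i _ => ?_
  rw [image_smul_set]
  exact Set.smul_set_mono (hST i).image_subset

section Combination

variable {Z E F ι : Type*} [SeminormedAddCommGroup Z] [NormedSpace ℝ Z]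
  [SeminormedAddCommGroup E] [NormedSpace ℝ E] [SeminormedAddCommGroup F] [NormedSpace ℝ F]
  [Fintype ι]

theorem diam_sum_smul_le_of_mapsTo {P : Z →ₗ[ℝ] E} {Q : Z →ₗ[ℝ] F}
    (hPQ : ∀ z, ‖z‖ ≤ ‖P z‖ + ‖Q z‖) {lam : ι → ℝ} (h0 : ∀ i, 0 ≤ lam i)
    (h1 : ∑ i, lam i = 1) {S : ι → Set Z} {T : ι → Set E}
    (hT : Bornology.IsBounded (∑ i, lam i • T i)) (hST : ∀ i, Set.MapsTo P (S i) (T i))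
    {s : ℝ} (hs : 0 ≤ s) (hQ : ∀ i, ∀ z ∈ S i, ‖Q z‖ ≤ s) :
    diam (∑ i, lam i • S i) ≤ diam (∑ i, lam i • T i) + 2 * s := by
  have hP := P.image_sum_smul_subset lam hST
  have hQ' : ∑ i, lam i • S i ⊆ Q ⁻¹' closedBall 0 s :=
    ((convex_closedBall 0 s).linear_preimage Q).sum_smul_subset h0 h1 fun i z hz => by
      simpa using hQ i z hz
  refine diam_le_of_forall_dist_le (by positivity) fun u hu v hv => ?_
  have hQu : ‖Q u‖ ≤ s := by simpa using hQ' hu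
  have hQv : ‖Q v‖ ≤ s := by simpa using hQ' hv
  calc dist u v ≤ ‖P u - P v‖ + ‖Q u - Q v‖ := by simpa [dist_eq_norm] using hPQ (u - v)
    _ ≤ diam (∑ i, lam i • T i) + (‖Q u‖ + ‖Q v‖) := by
      rw [← dist_eq_norm]
      exact add_le_add (dist_le_diam_of_mem hT (hP ⟨u, hu, rfl⟩) (hP ⟨v, hv, rfl⟩))
        (norm_sub_le _ _)
    _ ≤ diam (∑ i, lam i • T i) + 2 * s := by linarith

end Combination

theorem ContinuousLinearMap.opNorm_comp_eq_of_rightInverse {Z E G : Type*}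
    [SeminormedAddCommGroup Z] [NormedSpace ℝ Z] [SeminormedAddCommGroup E] [NormedSpace ℝ E]
    [SeminormedAddCommGroup G] [NormedSpace ℝ G] {P : Z →L[ℝ] E} (hP : ∀ z, ‖P z‖ ≤ ‖z‖)
    {J : E → Z} (hPJ : Function.RightInverse J P) (hJ : ∀ x, ‖J x‖ ≤ ‖x‖) (f : E →L[ℝ] G) :
    ‖f.comp P‖ = ‖f‖ := by
  refine le_antisymm (opNorm_le_bound _ (norm_nonneg _) fun z => ?_)
    (opNorm_le_bound _ (norm_nonneg _) fun x => ?_)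
  · exact (f.le_opNorm _).trans (mul_le_mul_of_nonneg_left (hP z) (norm_nonneg _))
  · calc ‖f x‖ = ‖f.comp P (J x)‖ := by rw [comp_apply, hPJ x]
      _ ≤ ‖f.comp P‖ * ‖x‖ :=
        ((f.comp P).le_opNorm _).trans (mul_le_mul_of_nonneg_left (hJ x) (norm_nonneg _))

section Slices

variable {X : Type*} [NormedAddCommGroup X] [NormedSpace ℝ X]

theorem ballSlice_mono (f : X →L[ℝ] ℝ) {α β : ℝ} (h : α ≤ β) :
    ballSlice X f α ⊆ ballSlice X f β :=
  fun _ hx => ⟨hx.1, by linarith [hx.2]⟩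

theorem ballSlice_subset_closedBall (f : X →L[ℝ] ℝ) (α : ℝ) :
    ballSlice X f α ⊆ closedBall 0 1 :=
  fun _ hx => hx.1

theorem one_sub_lt_norm_of_mem_ballSlice {f : X →L[ℝ] ℝ} (hf : ‖f‖ ≤ 1) {α : ℝ} {x : X}
    (hx : x ∈ ballSlice X f α) : 1 - α < ‖x‖ :=
  calc 1 - α < f x := hx.2
    _ ≤ ‖f‖ * ‖x‖ := (le_abs_self _).trans (f.le_opNorm x)
    _ ≤ ‖x‖ := mul_le_of_le_one_left (norm_nonneg _) hf

theorem mapsTo_ballSlice_comp {Z : Type*} [NormedAddCommGroup Z] [NormedSpace ℝ Z]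
    {P : Z →L[ℝ] X} (hP : ∀ z, ‖P z‖ ≤ ‖z‖) (f : X →L[ℝ] ℝ) (α : ℝ) :
    Set.MapsTo P (ballSlice Z (f.comp P) α) (ballSlice X f α) :=
  fun z hz => ⟨mem_closedBall_zero_iff.2 ((hP z).trans (mem_closedBall_zero_iff.1 hz.1)), hz.2⟩

end Slices

theorem BSCSP.of_projection {Z E F : Type*} [NormedAddCommGroup Z] [NormedSpace ℝ Z]
    [NormedAddCommGroup E] [NormedSpace ℝ E] [SeminormedAddCommGroup F] [NormedSpace ℝ F]
    (P : Z →L[ℝ] E) (Q : Z →ₗ[ℝ] F) (hP : ∀ z, ‖P z‖ ≤ ‖z‖) {J : E → Z}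
    (hPJ : Function.RightInverse J P) (hJ : ∀ x, ‖J x‖ ≤ ‖x‖)
    (hPQ : ∀ z, ‖z‖ ≤ ‖P z‖ + ‖Q z‖)
    (hQ : ∀ s > 0, ∃ δ > 0, ∀ z, ‖z‖ ≤ 1 → 1 - δ < ‖P z‖ → ‖Q z‖ < s)
    (hE : BSCSP E) : BSCSP Z := by
  intro ε hε
  obtain ⟨n, f, α, lam, hf, hα, h0, h1, hdiam⟩ := hE (ε / 2) (half_pos hε)
  obtain ⟨δ, hδ, hδQ⟩ := hQ (ε / 8) (by positivity)
  refine ⟨n, fun i => (f i).comp P, fun i => min (α i) δ, lam,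
    fun i => (ContinuousLinearMap.opNorm_comp_eq_of_rightInverse hP hPJ hJ (f i)).trans (hf i),
    fun i => lt_min (hα i) hδ, h0, h1, ?_⟩
  have hT : Bornology.IsBounded (∑ i, lam i • ballSlice E (f i) (α i)) :=
    isBounded_closedBall.subset <| (convex_closedBall 0 1).sum_smul_subset h0 h1
      fun i => ballSlice_subset_closedBall (f i) (α i)
  have hST : ∀ i, Set.MapsTo P (ballSlice Z ((f i).comp P) (min (α i) δ))
      (ballSlice E (f i) (α i)) := fun i =>
    (mapsTo_ballSlice_comp hP (f i) _).mono_right (ballSlice_mono _ (min_le_left _ _))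
  have hQ' : ∀ i, ∀ z ∈ ballSlice Z ((f i).comp P) (min (α i) δ), ‖Q z‖ ≤ ε / 8 :=
    fun i z hz => le_of_lt <| hδQ z (mem_closedBall_zero_iff.1 hz.1) <|
      (sub_le_sub_left (min_le_right _ _) 1).trans_lt
        (one_sub_lt_norm_of_mem_ballSlice (hf i).le (mapsTo_ballSlice_comp hP (f i) _ hz))
  calc diam (∑ i, lam i • ballSlice Z ((f i).comp P) (min (α i) δ))
      ≤ diam (∑ i, lam i • ballSlice E (f i) (α i)) + 2 * (ε / 8) :=
        diam_sum_smul_le_of_mapsTo (P := P.toLinearMap) hPQ h0 h1 hT hST (by positivity) hQ'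
    _ < ε := by linarith

namespace WithLp

variable {p : ℝ≥0∞} [Fact (1 ≤ p)] {X Y : Type*} [SeminormedAddCommGroup X]
  [SeminormedAddCommGroup Y]

theorem prod_norm_le_add (z : WithLp p (X × Y)) : ‖z‖ ≤ ‖z.fst‖ + ‖z.snd‖ :=
  calc ‖z‖ = ‖toLp p (z.fst, (0 : Y)) + toLp p ((0 : X), z.snd)‖ := by
        rw [← toLp_add, Prod.mk_add_mk, add_zero, zero_add]; rfl
    _ ≤ ‖z.fst‖ + ‖z.snd‖ :=
        (norm_add_le _ _).trans_eq (by rw [norm_toLp_fst, norm_toLp_snd])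

theorem prod_rpow_add_rpow_le_one (hp : p ≠ ∞) {z : WithLp p (X × Y)} (hz : ‖z‖ ≤ 1) :
    ‖z.fst‖ ^ p.toReal + ‖z.snd‖ ^ p.toReal ≤ 1 := by
  have hq : 0 < p.toReal := zero_lt_one.trans_le ((ENNReal.dichotomy p).resolve_left hp)
  by_contra! h
  have := Real.one_lt_rpow h (one_div_pos.2 hq)
  rw [← prod_norm_eq_add hq] at this
  linarith

theorem exists_pos_norm_snd_lt (hp : p ≠ ∞) {s : ℝ} (hs : 0 < s) :
    ∃ δ > 0, ∀ z : WithLp p (X × Y), ‖z‖ ≤ 1 → 1 - δ < ‖z.fst‖ → ‖z.snd‖ < s := by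
  obtain ⟨δ, hδ, h⟩ :=
    Real.exists_pos_lt_of_rpow_add_rpow_le_one ((ENNReal.dichotomy p).resolve_left hp) hs
  exact ⟨δ, hδ, fun z hz => h _ _ (norm_nonneg _) (prod_rpow_add_rpow_le_one hp hz)⟩

theorem exists_pos_norm_fst_lt (hp : p ≠ ∞) {s : ℝ} (hs : 0 < s) :
    ∃ δ > 0, ∀ z : WithLp p (X × Y), ‖z‖ ≤ 1 → 1 - δ < ‖z.snd‖ → ‖z.fst‖ < s := by
  obtain ⟨δ, hδ, h⟩ :=
    Real.exists_pos_lt_of_rpow_add_rpow_le_one ((ENNReal.dichotomy p).resolve_left hp) hs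
  exact ⟨δ, hδ, fun z hz => h _ _ (norm_nonneg _) ((add_comm _ _).trans_le
    (prod_rpow_add_rpow_le_one hp hz))⟩

end WithLp

theorem statement9_general (X Y : Type*) [NormedAddCommGroup X] [NormedSpace ℝ X]
    [NormedAddCommGroup Y] [NormedSpace ℝ Y]
    (p : ℝ≥0∞) [Fact (1 ≤ p)] (hp : p ≠ ∞) (h : BSCSP X ∨ BSCSP Y) :
    BSCSP (WithLp p (X × Y)) := by
  rcases h with hX | hY
  · exact BSCSP.of_projection (WithLp.fstL p ℝ X Y) (WithLp.sndL p ℝ X Y).toLinearMap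
      (WithLp.norm_fst_le X) (J := fun x => WithLp.toLp p (x, 0)) (fun _ => rfl)
      (fun x => (WithLp.norm_toLp_fst p X Y x).le) WithLp.prod_norm_le_add
      (fun _ => WithLp.exists_pos_norm_snd_lt hp) hX
  · exact BSCSP.of_projection (WithLp.sndL p ℝ X Y) (WithLp.fstL p ℝ X Y).toLinearMap
      (WithLp.norm_snd_le X) (J := fun y => WithLp.toLp p (0, y)) (fun _ => rfl)
      (fun y => (WithLp.norm_toLp_snd p X Y y).le)
      (fun z => (WithLp.prod_norm_le_add z).trans_eq (add_comm _ _))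
      (fun _ => WithLp.exists_pos_norm_fst_lt hp) hY

/-- For `Z = X ⊕_p Y` (`1 ≤ p < ∞`), if `X` or `Y` has `BSCSP` then `Z` has `BSCSP`. -/
theorem statement9 (X Y : Type*) [NormedAddCommGroup X] [NormedSpace ℝ X] [CompleteSpace X]
    [NormedAddCommGroup Y] [NormedSpace ℝ Y] [CompleteSpace Y]
    (p : ℝ≥0∞) [Fact (1 ≤ p)] (hp : p ≠ ∞) (h : BSCSP X ∨ BSCSP Y) :
    BSCSP (WithLp p (X × Y)) :=
  statement9_general X Y p hp h
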